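/- arXiv:1211.0803 — 3 statements merged into one kernel-verified Lean document; each statement's English description precedes it below -/
import Mathlib

section
/- Let σ and σ' be two shift families on G, and for each j ∈ V let P^{(j)} be the permutation matrix on ℂ^{N(j)} representing σ'_j ∘ σ_j^{-1} (so P^{(j)} sends the basis vector e_{σ_j(i)} to e_{σ'_j(i)} for every i ∈ N(j)). Then (⊕_{j∈V} P^{(j)})·S_σ = S_{σ'}, and consequently for every coin H the G-type walks satisfy U^G_{σ'}[H_j : j∈V] = U^G_σ[H_j P^{(j)} : j∈V]. -/
open Matrix Complex BigOperators

section QWFramework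

variable {V : Type*}

instance arcDecPred (G : SimpleGraph V) [DecidableRel G.Adj] :
    DecidablePred fun p : V × V => G.Adj p.1 p.2 :=
  fun p => inferInstanceAs (Decidable (G.Adj p.1 p.2))

instance nbrDecPred (G : SimpleGraph V) [DecidableRel G.Adj] (u : V) :
    DecidablePred (G.Adj u) :=
  fun w => inferInstanceAs (Decidable (G.Adj u w))

/-- The symmetric arc set `D(G)` of a graph: ordered pairs of adjacent vertices. -/
abbrev Arc (G : SimpleGraph V) : Type _ := {p : V × V // G.Adj p.1 p.2}

variable [Fintype V] [DecidableEq V]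

/-- The shift (permutation) operator `S_σ` of a shift family `σ`, acting on `ℂ^{D(G)}`
by `S_σ |i,j⟩ = |j, σ_j(i)⟩`. -/
noncomputable def shiftOp (G : SimpleGraph V) [DecidableRel G.Adj]
    (σ : ∀ u : V, Equiv.Perm {w : V // G.Adj u w}) :
    Matrix (Arc G) (Arc G) ℂ :=
  fun a b => if a.1.1 = b.1.2 ∧ a.1.2 = (σ b.1.2 ⟨b.1.1, b.2.symm⟩).1 then 1 else 0

/-- The flip-flop shift family: the identity permutation at every vertex. -/
def ffFam (G : SimpleGraph V) : ∀ u : V, Equiv.Perm {w : V // G.Adj u w} :=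
  fun _ => Equiv.refl _

/-- The flip-flop shift operator `S`, with `S|i,j⟩ = |j,i⟩`. -/
noncomputable def ffShift (G : SimpleGraph V) [DecidableRel G.Adj] : Matrix (Arc G) (Arc G) ℂ :=
  shiftOp G (ffFam G)

/-- The block-diagonal coin operator `C = ⊕_u H_u`, acting by
`C|i,j⟩ = Σ_{k∈N(i)} (H_i)_{k,j} |i,k⟩`. -/
noncomputable def coinOp (G : SimpleGraph V) [DecidableRel G.Adj]
    (H : ∀ u : V, Matrix {w : V // G.Adj u w} {w : V // G.Adj u w} ℂ) :
    Matrix (Arc G) (Arc G) ℂ :=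
  fun a b => if h : a.1.1 = b.1.1 then H b.1.1 ⟨a.1.2, by rw [← h]; exact a.2⟩ ⟨b.1.2, b.2⟩ else 0

/-- The G-type (Gudder type) coined quantum walk `U^G_σ[H] = C·S_σ`. -/
noncomputable def gWalk (G : SimpleGraph V) [DecidableRel G.Adj]
    (σ : ∀ u : V, Equiv.Perm {w : V // G.Adj u w})
    (H : ∀ u : V, Matrix {w : V // G.Adj u w} {w : V // G.Adj u w} ℂ) :
    Matrix (Arc G) (Arc G) ℂ :=
  coinOp G H * shiftOp G σ

/-- The A-type (Ambainis type) coined quantum walk `U^A_σ[H] = S_σ·C`. -/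
noncomputable def aWalk (G : SimpleGraph V) [DecidableRel G.Adj]
    (σ : ∀ u : V, Equiv.Perm {w : V // G.Adj u w})
    (H : ∀ u : V, Matrix {w : V // G.Adj u w} {w : V // G.Adj u w} ℂ) :
    Matrix (Arc G) (Arc G) ℂ :=
  shiftOp G σ * coinOp G H

end QWFramework

/-- The permutation matrix of a permutation `π`, sending the basis vector `e_b` to `e_{π b}`. -/
noncomputable def permMat {α : Type*} [Fintype α] [DecidableEq α] (π : Equiv.Perm α) :
    Matrix α α ℂ :=
  fun a b => if a = π b then 1 else 0

section Aux

variable {V : Type*} [Fintype V] [DecidableEq V]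

/-- Arcs as a sigma type. -/
def arcEquiv (G : SimpleGraph V) [DecidableRel G.Adj] :
    Arc G ≃ Σ u : V, {w : V // G.Adj u w} where
  toFun a := ⟨a.1.1, ⟨a.1.2, a.2⟩⟩
  invFun p := ⟨(p.1, p.2.1), p.2.2⟩
  left_inv a := rfl
  right_inv p := rfl

lemma sum_arc (G : SimpleGraph V) [DecidableRel G.Adj] (f : Arc G → ℂ) :
    ∑ c : Arc G, f c = ∑ u : V, ∑ k : {w : V // G.Adj u w}, f ⟨(u, k.1), k.2⟩ := by
  rw [← Equiv.sum_comp (arcEquiv G).symm f, ← Finset.univ_sigma_univ, Finset.sum_sigma]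
  rfl

lemma mul_apply_arc (G : SimpleGraph V) [DecidableRel G.Adj]
    (M N : Matrix (Arc G) (Arc G) ℂ) (a b : Arc G) :
    (M * N) a b = ∑ u : V, ∑ k : {w : V // G.Adj u w},
      M a ⟨(u, k.1), k.2⟩ * N ⟨(u, k.1), k.2⟩ b := by
  rw [Matrix.mul_apply, sum_arc]

lemma coinOp_mul (G : SimpleGraph V) [DecidableRel G.Adj]
    (A B : ∀ u : V, Matrix {w : V // G.Adj u w} {w : V // G.Adj u w} ℂ) :
    coinOp G A * coinOp G B = coinOp G (fun u => A u * B u) := by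
  ext a b
  obtain ⟨⟨x, y⟩, hxy⟩ := a
  obtain ⟨⟨z, w⟩, hzw⟩ := b
  rw [mul_apply_arc]
  rw [Finset.sum_eq_single x]
  · by_cases h : x = z
    · subst h
      simp [coinOp, Matrix.mul_apply]
    · simp only [coinOp, dif_neg h]
      apply Finset.sum_eq_zero
      intro k _
      simp [dif_neg h]
  · intro u _ hu
    apply Finset.sum_eq_zero
    intro k _
    simp [coinOp, dif_neg (Ne.symm hu)]
  · simp

end Aux

/-- For shift families `σ, σ'`, with `P^{(j)}` the permutation matrix of
`σ'_j ∘ σ_j⁻¹` (sending `e_{σ_j(i)}` to `e_{σ'_j(i)}`), one has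
`(⊕_j P^{(j)})·S_σ = S_{σ'}` and `U^G_{σ'}[H_j] = U^G_σ[H_j·P^{(j)}]` for every coin `H`. -/
theorem shift_change_of_partition {V : Type*} [Fintype V] [DecidableEq V]
    (G : SimpleGraph V) [DecidableRel G.Adj] (hG : G.Connected)
    (σ σ' : ∀ u : V, Equiv.Perm {w : V // G.Adj u w})
    (H : ∀ u : V, Matrix {w : V // G.Adj u w} {w : V // G.Adj u w} ℂ)
    (hH : ∀ u : V, H u ∈ Matrix.unitaryGroup {w : V // G.Adj u w} ℂ) :
    coinOp G (fun j => permMat (σ' j * (σ j)⁻¹)) * shiftOp G σ = shiftOp G σ' ∧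
      gWalk G σ' H = gWalk G σ (fun j => H j * permMat (σ' j * (σ j)⁻¹)) := by
  have key : coinOp G (fun j => permMat (σ' j * (σ j)⁻¹)) * shiftOp G σ = shiftOp G σ' := by
    ext a b
    obtain ⟨⟨x, y⟩, hxy⟩ := a
    obtain ⟨⟨z, w⟩, hzw⟩ := b
    rw [mul_apply_arc]
    rw [Finset.sum_eq_single w]
    · rw [Finset.sum_eq_single (σ w ⟨z, hzw.symm⟩)]
      · by_cases h : x = w
        · subst h
          simp [coinOp, shiftOp, permMat, Equiv.Perm.mul_apply, Subtype.ext_iff]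
        · simp [coinOp, shiftOp, dif_neg h, h]
      · intro k _ hk
        have h2 : (k : V) ≠ ((σ w ⟨z, hzw.symm⟩ : _) : V) := fun h => hk (Subtype.ext h)
        simp [shiftOp, h2]
      · simp
    · intro u _ hu
      apply Finset.sum_eq_zero
      intro k _
      have : ¬ (u = w ∧ k.1 = (σ w ⟨z, hzw.symm⟩).1) := fun h => hu h.1
      rw [shiftOp]
      simp only [if_neg this, mul_zero]
    · simp
  refine ⟨key, ?_⟩
  rw [gWalk, gWalk, ← key, ← Matrix.mul_assoc, coinOp_mul]
end

section
/- (Extra eigenvalues of the Szegedy walk) If |E| > |V|, then both 1 and −1 are eigenvalues of the Szegedy walk U^{(P)}, and the eigenspace of U^{(P)} for each of the eigenvalues 1 and −1 has dimension at least |E| − |V|. -/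
open Matrix Complex BigOperators

/-- The Szegedy local coin at vertex `j`: `(H_j)_{m,l} = 2√(p_{j,l}p_{j,m}) − δ_{l,m}`. -/
noncomputable def szCoin {V : Type*} [Fintype V] [DecidableEq V]
    (G : SimpleGraph V) [DecidableRel G.Adj] (p : V → V → ℝ) (j : V) :
    Matrix {w : V // G.Adj j w} {w : V // G.Adj j w} ℂ :=
  fun m l => ((2 * Real.sqrt (p j l.1 * p j m.1) : ℝ) : ℂ) - if l = m then 1 else 0

/-- The Szegedy walk `U^{(P)} = S·C`: the A-type walk with flip-flop shift and Szegedy coins. -/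
noncomputable def szWalk {V : Type*} [Fintype V] [DecidableEq V]
    (G : SimpleGraph V) [DecidableRel G.Adj] (p : V → V → ℝ) :
    Matrix (Arc G) (Arc G) ℂ :=
  ffShift G * coinOp G (szCoin G p)

/-- The map `A : ℂ^V → ℂ^{D(G)}`, `A|j⟩ = Σ_{l∈N(j)} √(p_{j,l}) |j,l⟩`, as a matrix. -/
noncomputable def szA {V : Type*} [Fintype V] [DecidableEq V]
    (G : SimpleGraph V) [DecidableRel G.Adj] (p : V → V → ℝ) :
    Matrix (Arc G) V ℂ :=
  fun a i => if a.1.1 = i then ((Real.sqrt (p a.1.1 a.1.2) : ℝ) : ℂ) else 0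

/-- The `|V|×|V|` matrix `J` with `(J)_{u,v} = √(p_{u,v} p_{v,u})` on arcs and `0` otherwise. -/
noncomputable def szJ {V : Type*} [Fintype V] [DecidableEq V]
    (G : SimpleGraph V) [DecidableRel G.Adj] (p : V → V → ℝ) :
    Matrix V V ℂ :=
  fun u v => if G.Adj u v then ((Real.sqrt (p u v * p v u) : ℝ) : ℂ) else 0


section SzAux

variable {V : Type*} [Fintype V] [DecidableEq V]
  (G : SimpleGraph V) [DecidableRel G.Adj] (p : V → V → ℝ)

/-- Arc reversal. -/
def aswap (a : Arc G) : Arc G := ⟨(a.1.2, a.1.1), a.2.symm⟩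

lemma ffShift_apply' (a b : Arc G) :
    ffShift G a b = if b = aswap G a then 1 else 0 := by
  unfold ffShift shiftOp ffFam
  refine if_congr ?_ rfl rfl
  constructor
  · rintro ⟨h1, h2⟩
    exact Subtype.ext (Prod.ext h2.symm h1.symm)
  · rintro rfl
    exact ⟨rfl, rfl⟩

lemma ffShift_mulVec (ψ : Arc G → ℂ) :
    (ffShift G).mulVec ψ = fun a => ψ (aswap G a) := by
  funext a
  rw [Matrix.mulVec, dotProduct, Finset.sum_eq_single (aswap G a)]
  · rw [ffShift_apply', if_pos rfl, one_mul]
  · intro b _ hb; rw [ffShift_apply', if_neg hb, zero_mul]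
  · intro h; exact absurd (Finset.mem_univ _) h

lemma arcCard : Fintype.card (Arc G) = 2 * G.edgeFinset.card := by
  rw [← SimpleGraph.dart_card_eq_twice_card_edges]
  exact Fintype.card_congr
    ⟨fun a => ⟨a.1, a.2⟩, fun d => ⟨d.toProd, d.adj⟩, fun a => rfl, fun d => rfl⟩

lemma coin_eq (hp0 : ∀ u v, 0 ≤ p u v) :
    coinOp G (szCoin G p) = (2 : ℂ) • (szA G p * (szA G p)ᵀ) - 1 := by
  ext a b
  by_cases h : a.1.1 = b.1.1
  · have hs : Real.sqrt (p b.1.1 b.1.2 * p b.1.1 a.1.2)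
        = Real.sqrt (p a.1.1 a.1.2) * Real.sqrt (p b.1.1 b.1.2) := by
      rw [Real.sqrt_mul (hp0 _ _), ← h, mul_comm]
    simp only [coinOp, szCoin, dif_pos h, Matrix.sub_apply, Matrix.smul_apply,
      Matrix.mul_apply, Matrix.transpose_apply, szA, Matrix.one_apply, smul_eq_mul]
    rw [Finset.sum_eq_single a.1.1]
    · have hc : (⟨b.1.2, b.2⟩ : {w : V // G.Adj b.1.1 w}) =
          ⟨a.1.2, by rw [← h]; exact a.2⟩ ↔ a = b := by
        rw [Subtype.mk.injEq]
        constructor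
        · intro e; exact Subtype.ext (Prod.ext h e.symm)
        · rintro rfl; rfl
      rw [if_pos rfl, if_pos h.symm, hs, if_congr hc rfl rfl]
      push_cast
      by_cases hab : a = b <;> simp [hab] <;> ring
    · intro i _ hi
      rw [if_neg (fun e => hi e.symm), zero_mul]
    · intro hnot; exact absurd (Finset.mem_univ _) hnot
  · have hab : a ≠ b := fun e => h (by rw [e])
    simp only [coinOp, dif_neg h, Matrix.sub_apply, Matrix.smul_apply,
      Matrix.mul_apply, Matrix.transpose_apply, szA, Matrix.one_apply,
      if_neg hab, smul_eq_mul]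
    rw [Finset.sum_eq_zero, mul_zero, sub_zero]
    intro i _
    rcases eq_or_ne (a.1.1) i with h1 | h1
    · rw [if_neg (show ¬ b.1.1 = i from fun e => h (h1.trans e.symm)), mul_zero]
    · rw [if_neg h1, zero_mul]

lemma szWalk_mulVec_ker (hp0 : ∀ u v, 0 ≤ p u v) (ψ : Arc G → ℂ)
    (hker : ((szA G p)ᵀ).mulVec ψ = 0) :
    (szWalk G p).mulVec ψ = -((ffShift G).mulVec ψ) := by
  rw [szWalk, ← Matrix.mulVec_mulVec, coin_eq G p hp0]
  have hcv : ((2 : ℂ) • (szA G p * (szA G p)ᵀ) - 1).mulVec ψ = -ψ := by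
    rw [Matrix.sub_mulVec, Matrix.smul_mulVec, ← Matrix.mulVec_mulVec, hker,
      Matrix.mulVec_zero, smul_zero, Matrix.one_mulVec, zero_sub]
  rw [hcv, Matrix.mulVec_neg]

end SzAux

/-- extra eigenvalues of the Szegedy walk: if `|E| > |V|` then both `1` and `−1`
are eigenvalues of `U^{(P)}`, with eigenspaces of dimension at least `|E| − |V|`. -/
theorem szWalk_extra_eigenvalues {V : Type*} [Fintype V] [DecidableEq V]
    (G : SimpleGraph V) [DecidableRel G.Adj] (hG : G.Connected)
    (p : V → V → ℝ) (hp0 : ∀ u v, 0 ≤ p u v) (hpadj : ∀ u v, ¬ G.Adj u v → p u v = 0)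
    (hpsum : ∀ u : V, ∑ w ∈ G.neighborFinset u, p u w = 1)
    (hcard : Fintype.card V < G.edgeFinset.card) :
    Module.End.HasEigenvalue (Matrix.toLin' (szWalk G p)) 1 ∧
    Module.End.HasEigenvalue (Matrix.toLin' (szWalk G p)) (-1) ∧
    G.edgeFinset.card - Fintype.card V ≤
      Module.finrank ℂ ↥(Module.End.eigenspace (Matrix.toLin' (szWalk G p)) 1) ∧
    G.edgeFinset.card - Fintype.card V ≤
      Module.finrank ℂ ↥(Module.End.eigenspace (Matrix.toLin' (szWalk G p)) (-1)) := by
    classical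
  set n := Fintype.card V with hn
  set m := G.edgeFinset.card with hm
  set FL : (Arc G → ℂ) →ₗ[ℂ] (V → ℂ) := Matrix.toLin' ((szA G p)ᵀ) with hFLdef
  set UL : Module.End ℂ (Arc G → ℂ) := Matrix.toLin' (szWalk G p) with hULdef
  have hU : ∀ ψ : Arc G → ℂ, FL ψ = 0 → UL ψ = -((ffShift G).mulVec ψ) := by
    intro ψ hψ
    rw [hULdef, Matrix.toLin'_apply]
    refine szWalk_mulVec_ker G p hp0 ψ ?_
    rw [← Matrix.toLin'_apply ((szA G p)ᵀ) ψ]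
    exact hψ
  set SL : Module.End ℂ (Arc G → ℂ) := Matrix.toLin' (ffShift G) with hSLdef
  have hSL : ∀ ψ : Arc G → ℂ, SL ψ = fun a => ψ (aswap G a) := fun ψ => by
    rw [hSLdef, Matrix.toLin'_apply, ffShift_mulVec]
  have hS2 : ∀ ψ : Arc G → ℂ, SL (SL ψ) = ψ := fun ψ => by
    rw [hSL, hSL]; rfl
  set E1 := Module.End.eigenspace SL 1 with hE1
  set Em := Module.End.eigenspace SL (-1) with hEm
  have hmemE1 : ∀ ψ, ψ ∈ E1 ↔ SL ψ = ψ := fun ψ => by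
    rw [hE1, Module.End.mem_eigenspace_iff, one_smul]
  have hmemEm : ∀ ψ, ψ ∈ Em ↔ SL ψ = -ψ := fun ψ => by
    rw [hEm, Module.End.mem_eigenspace_iff, neg_one_smul]
  have hdim : Module.finrank ℂ (Arc G → ℂ) = 2 * m := by
    rw [Module.finrank_fintype_fun_eq_card, arcCard]
  have hr1 : LinearMap.range (SL + 1) ≤ E1 := by
    rintro x ⟨y, rfl⟩
    rw [hmemE1]
    simp only [LinearMap.add_apply, Module.End.one_apply, map_add, hS2 y]
    abel
  have hrm : LinearMap.range (SL - 1) ≤ Em := by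
    rintro x ⟨y, rfl⟩
    rw [hmemEm]
    simp only [LinearMap.sub_apply, Module.End.one_apply, map_sub, hS2 y]
    abel
  have hkEm : LinearMap.ker (SL + 1) = Em := by
    ext ψ
    rw [LinearMap.mem_ker, hmemEm ψ, LinearMap.add_apply, Module.End.one_apply,
      add_eq_zero_iff_eq_neg]
  have hkE1 : LinearMap.ker (SL - 1) = E1 := by
    ext ψ
    rw [LinearMap.mem_ker, hmemE1 ψ, LinearMap.sub_apply, Module.End.one_apply,
      sub_eq_zero]
  have hfr1 := LinearMap.finrank_range_add_finrank_ker (SL + 1)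
  have hfrm := LinearMap.finrank_range_add_finrank_ker (SL - 1)
  rw [hdim, hkEm] at hfr1
  rw [hdim, hkE1] at hfrm
  have hle1 : Module.finrank ℂ (LinearMap.range (SL + 1)) ≤ Module.finrank ℂ E1 :=
    Submodule.finrank_mono hr1
  have hlem : Module.finrank ℂ (LinearMap.range (SL - 1)) ≤ Module.finrank ℂ Em :=
    Submodule.finrank_mono hrm
  obtain ⟨eo⟩ := Fintype.truncEquivFin V
  set ε : Arc G → ℂ := fun a => if (eo a.1.1 : ℕ) < eo a.1.2 then 1 else -1 with hε
  have hεswap : ∀ a, ε (aswap G a) = -ε a := by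
    intro a
    have hne : (eo a.1.1 : ℕ) ≠ eo a.1.2 :=
      fun e => a.2.ne (eo.injective (Fin.ext e))
    simp only [hε, aswap]
    rcases lt_or_gt_of_ne hne with h | h
    · rw [if_neg (not_lt.mpr (le_of_lt h)), if_pos h]
    · rw [if_pos h, if_neg (not_lt.mpr (le_of_lt h))]
      norm_num
  have hεsq : ∀ a, ε a * ε a = 1 := by
    intro a; simp only [hε]; split <;> norm_num
  set mL : (Arc G → ℂ) →ₗ[ℂ] (Arc G → ℂ) :=
    { toFun := fun ψ a => ε a * ψ a
      map_add' := by intros x y; funext a; simp [mul_add]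
      map_smul' := by
        intros c x; funext a
        simp only [Pi.smul_apply, smul_eq_mul, RingHom.id_apply]
        ring } with hmL
  have hmm : ∀ ψ, mL (mL ψ) = ψ := by
    intro ψ; funext a
    show ε a * (ε a * ψ a) = ψ a
    rw [← mul_assoc, hεsq, one_mul]
  have hmInj : Function.Injective mL := fun x y hxy => by
    rw [← hmm x, ← hmm y, hxy]
  have hSLm : ∀ ψ, SL (mL ψ) = -(mL (SL ψ)) := by
    intro ψ; funext a
    rw [hSL]
    show ε (aswap G a) * ψ (aswap G a) = (-(mL (SL ψ))) a
    rw [hεswap]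
    show -ε a * ψ (aswap G a) = -(ε a * (SL ψ) a)
    rw [hSL]
    ring
  have hmap1 : ∀ ψ ∈ E1, mL ψ ∈ Em := by
    intro ψ h
    rw [hmemEm, hSLm, (hmemE1 ψ).1 h]
  have hmapm : ∀ ψ ∈ Em, mL ψ ∈ E1 := by
    intro ψ h
    rw [hmemE1, hSLm, (hmemEm ψ).1 h, map_neg, neg_neg]
  have hinjr : ∀ (P Q : Submodule ℂ (Arc G → ℂ)) (h : ∀ ψ ∈ P, mL ψ ∈ Q),
      Module.finrank ℂ P ≤ Module.finrank ℂ Q := by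
    intro P Q h
    refine LinearMap.finrank_le_finrank_of_injective (f := mL.restrict h) ?_
    intro x y hxy
    exact Subtype.ext (hmInj (congrArg Subtype.val hxy))
  have heq : Module.finrank ℂ E1 = Module.finrank ℂ Em :=
    le_antisymm (hinjr E1 Em hmap1) (hinjr Em E1 hmapm)
  have key : ∀ E : Submodule ℂ (Arc G → ℂ),
      Module.finrank ℂ E ≤ Module.finrank ℂ (E ⊓ LinearMap.ker FL : Submodule ℂ _) + n := by
    intro E
    have h3 := LinearMap.finrank_range_add_finrank_ker (FL.comp E.subtype)
    have h4 : LinearMap.ker (FL.comp E.subtype)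
        = Submodule.comap E.subtype (LinearMap.ker FL ⊓ E) := by
      rw [LinearMap.ker_comp, Submodule.comap_inf, Submodule.comap_subtype_self, inf_top_eq]
    have h6 : Module.finrank ℂ (LinearMap.ker (FL.comp E.subtype))
        = Module.finrank ℂ (LinearMap.ker FL ⊓ E : Submodule ℂ _) := by
      rw [h4]
      exact (Submodule.comapSubtypeEquivOfLe inf_le_right).finrank_eq
    have h7 : Module.finrank ℂ (LinearMap.range (FL.comp E.subtype)) ≤ n := by
      calc Module.finrank ℂ (LinearMap.range (FL.comp E.subtype))
          ≤ Module.finrank ℂ (V → ℂ) := Submodule.finrank_le _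
        _ = n := Module.finrank_fintype_fun_eq_card ℂ
    rw [h6, inf_comm] at h3
    omega
  have hWm_le : Em ⊓ LinearMap.ker FL ≤ Module.End.eigenspace UL 1 := by
    rintro ψ ⟨h1, h2⟩
    rw [Module.End.mem_eigenspace_iff, one_smul, hU ψ h2]
    have hfs : (ffShift G).mulVec ψ = SL ψ := by rw [hSLdef, Matrix.toLin'_apply]
    rw [hfs, (hmemEm ψ).1 h1, neg_neg]
  have hW1_le : E1 ⊓ LinearMap.ker FL ≤ Module.End.eigenspace UL (-1) := by
    rintro ψ ⟨h1, h2⟩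
    rw [Module.End.mem_eigenspace_iff, neg_one_smul, hU ψ h2]
    have hfs : (ffShift G).mulVec ψ = SL ψ := by rw [hSLdef, Matrix.toLin'_apply]
    rw [hfs, (hmemE1 ψ).1 h1]
  have hu1 : Module.finrank ℂ (Em ⊓ LinearMap.ker FL : Submodule ℂ _)
      ≤ Module.finrank ℂ (Module.End.eigenspace UL 1) := Submodule.finrank_mono hWm_le
  have hum : Module.finrank ℂ (E1 ⊓ LinearMap.ker FL : Submodule ℂ _)
      ≤ Module.finrank ℂ (Module.End.eigenspace UL (-1)) := Submodule.finrank_mono hW1_le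
  have k1 := key E1
  have km := key Em
  have hmn : n < m := hcard
  have hb1 : m - n ≤ Module.finrank ℂ (Module.End.eigenspace UL 1) := by omega
  have hbm : m - n ≤ Module.finrank ℂ (Module.End.eigenspace UL (-1)) := by omega
  refine ⟨?_, ?_, hb1, hbm⟩
  · rw [Module.End.hasEigenvalue_iff]
    intro hbot
    rw [hbot, finrank_bot] at hb1
    omega
  · rw [Module.End.hasEigenvalue_iff]
    intro hbot
    rw [hbot, finrank_bot] at hbm
    omega
end

section
/- (Determinant identity for generalized quantum graph walks) Let (L, λ, A) be quantum-graph parameters, k a nonzero real, and for each j ∈ V let α_j = (α_{j,l})_{l∈N(j)} ∈ ℂ^{N(j)} be a unit vector (Σ_{l∈N(j)} |α_{j,l}|² = 1). Define the coin H_j(k) = D_j(k)·((1 + e^{−iρ_j(k)})·Π_j − I_{d_j}), where Π_j = |α_j⟩⟨α_j|, D_j(k) = diag(e^{iL_{{j,m}}(k − A_{(j,m)})})_{m∈N(j)}, and e^{iρ_j(k)} = (1 + iλ_j/(k d_j))/(1 − iλ_j/(k d_j)); let Ũ(k) = S·⊕_{j∈V} H_j(k) be the corresponding A-type walk with flip-flop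 shift. Then for every t ∈ ℂ with t²·e^{2ikL_e} ≠ 1 for all e ∈ E, det(I_{2|E|} − t·Ũ(k)) = det(I_{|V|} − t·T(t) + t²·𝒟(t)) · ∏_{e∈E} (1 − t²·e^{2ikL_e}), where T(t) is the |V|×|V| matrix with T(t)_{i,j} = e^{iL_{{i,j}}(k + A_{(i,j)})}·(1 + e^{−iρ_j(k)})·α_{j,i}·conj(α_{i,j}) / (1 − t²·e^{2ikL_{{i,j}}}) for (i,j) ∈ D(G) and 0 otherwise, and 𝒟(t) is the diagonal |V|×|V| matrix with 𝒟(t)_{j,j} = (1 + e^{−iρ_j(k)})·Σ_{l∈N(j)} |α_{j,l}|²·e^{2ikL_{{j,l}}}/(1 − t²·e^{2ikL_{{j,l}}}). -/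
open Matrix Complex BigOperators

/-- The arc value of an edge potential: `A_{(i,j)} = sgn(j−i)·A_{{i,j}}`. -/
def arcPot {V : Type*} [LinearOrder V] (Ae : V → V → ℝ) (i j : V) : ℝ :=
  if i < j then Ae i j else -(Ae i j)

/-- The local coin `H_j(k)` of the quantum graph walk at vertex `j`:
`(H_j(k))_{m,l} = (2/(d_j + iλ_j/k) − δ_{l,m})·e^{iL_{{j,m}}(k − A_{(j,m)})}`. -/
noncomputable def qgCoin {V : Type*} [Fintype V] [LinearOrder V]
    (G : SimpleGraph V) [DecidableRel G.Adj]
    (L : V → V → ℝ) (lam : V → ℝ) (Ae : V → V → ℝ) (k : ℝ) (j : V) :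
    Matrix {w : V // G.Adj j w} {w : V // G.Adj j w} ℂ :=
  fun m l =>
    (2 / ((G.degree j : ℂ) + Complex.I * (lam j : ℂ) / (k : ℂ)) - if l = m then 1 else 0) *
      Complex.exp (Complex.I * (L j m.1 : ℂ) * ((k : ℂ) - (arcPot Ae j m.1 : ℂ)))

/-- The quantum graph walk `U^{(L,λ,A)}(k) = S·C(k)`: the A-type walk with flip-flop shift
and coins `H_j(k)`. -/
noncomputable def qgWalk {V : Type*} [Fintype V] [LinearOrder V]
    (G : SimpleGraph V) [DecidableRel G.Adj]
    (L : V → V → ℝ) (lam : V → ℝ) (Ae : V → V → ℝ) (k : ℝ) :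
    Matrix (Arc G) (Arc G) ℂ :=
  ffShift G * coinOp G (qgCoin G L lam Ae k)

/-- `e^{−iρ_j(k)}`, where `e^{iρ_j(k)} = (1 + iλ_j/(k d_j))/(1 − iλ_j/(k d_j))`. -/
noncomputable def expNegRho {V : Type*} [Fintype V] [DecidableEq V]
    (G : SimpleGraph V) [DecidableRel G.Adj] (lam : V → ℝ) (k : ℝ) (j : V) : ℂ :=
  (1 - Complex.I * (lam j : ℂ) / ((k : ℂ) * (G.degree j : ℂ))) /
    (1 + Complex.I * (lam j : ℂ) / ((k : ℂ) * (G.degree j : ℂ)))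

/-- The generalized quantum-graph-walk coin
`H_j(k) = D_j(k)·((1 + e^{−iρ_j(k)})·Π_j − I)`, with `Π_j = |α_j⟩⟨α_j|` and
`D_j(k) = diag(e^{iL_{{j,m}}(k − A_{(j,m)})})`. -/
noncomputable def genQgCoin {V : Type*} [Fintype V] [LinearOrder V]
    (G : SimpleGraph V) [DecidableRel G.Adj]
    (L : V → V → ℝ) (lam : V → ℝ) (Ae : V → V → ℝ) (k : ℝ)
    (α : ∀ j : V, {w : V // G.Adj j w} → ℂ) (j : V) :
    Matrix {w : V // G.Adj j w} {w : V // G.Adj j w} ℂ :=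
  fun m l =>
    Complex.exp (Complex.I * (L j m.1 : ℂ) * ((k : ℂ) - (arcPot Ae j m.1 : ℂ))) *
      ((1 + expNegRho G lam k j) * α j m * (starRingEnd ℂ) (α j l) - if m = l then 1 else 0)


/-!
The coin factors as `⊕_j H_j(k) = D (B C - 1)`, where `D` is the diagonal of the phases
`d_{jm} = e^{iL_{{j,m}}(k - A_{(j,m)})}` and `B : ℂ^V → ℂ^{D(G)}`, `C : ℂ^{D(G)} → ℂ^V` are
supported on (arc, tail) pairs with entries `(1 + e^{-iρ_j}) α_{j,m}` and `conj α_{j,m}`.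
With `W = S D` this gives `1 - t Ũ = (1 + t W) - t W B C`. Since `W² = diag(e^{2ikL_e})` is
diagonal, `(1 + t W)⁻¹ = (1 - t W) (1 - t² W²)⁻¹`, and `det(1 - X Y) = det(1 - Y X)` moves the
remaining determinant to `ℂ^V`, where `C (1 - t² W²)⁻¹ W B = T(t)` and
`C W (1 - t² W²)⁻¹ W B = 𝒟(t)`. Finally `1 + t W` is block diagonal with one `2 × 2` block
`!![1, t d_{ji}; t d_{ij}, 1]` per edge, and `d_{ij} d_{ji} = e^{2ikL_{{i,j}}}` because `L` is
symmetric and `A` antisymmetric.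
-/

namespace Matrix

variable {ι κ R : Type*} [Fintype ι] [DecidableEq ι] [Fintype κ] [DecidableEq κ] [CommRing R]

theorem det_sub_mul_mul_of_mul_eq_one {M N : Matrix ι ι R} (hMN : M * N = 1)
    (X : Matrix ι ι R) (B : Matrix ι κ R) (C : Matrix κ ι R) :
    det (M - X * B * C) = det M * det (1 - C * (N * X * B)) := by
  have hfac : M - X * B * C = M * (1 - N * X * B * C) := by
    simp only [Matrix.mul_sub, Matrix.mul_one, ← Matrix.mul_assoc, hMN, Matrix.one_mul]
  rw [hfac, det_mul, det_one_sub_mul_comm]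

theorem one_add_smul_mul_one_sub_smul_mul_diagonal {W : Matrix ι ι R} {e ε : ι → R} (t : R)
    (hW : W * W = diagonal e) (hε : ∀ a, (1 - t ^ 2 * e a) * ε a = 1) :
    (1 + t • W) * ((1 - t • W) * diagonal ε) = 1 := by
  have hsq : (1 + t • W) * (1 - t • W) = diagonal fun a => 1 - t ^ 2 * e a := by
    rw [add_mul, Matrix.one_mul, Matrix.mul_sub, Matrix.mul_one, Matrix.smul_mul,
      Matrix.mul_smul, hW, smul_smul, sub_add_sub_cancel, ← diagonal_one, ← diagonal_smul,
      diagonal_sub, pow_two]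
    rfl
  rw [← Matrix.mul_assoc, hsq, diagonal_mul_diagonal, ← diagonal_one]
  exact congrArg diagonal (funext hε)

theorem det_one_sub_smul_mul_mul_sub {W : Matrix ι ι R} {e ε : ι → R} (t : R)
    (hW : W * W = diagonal e) (hε : ∀ a, (1 - t ^ 2 * e a) * ε a = 1)
    (B : Matrix ι κ R) (C : Matrix κ ι R) :
    det (1 - t • (W * B * C - W)) = det (1 + t • W) *
      det (1 - t • (C * diagonal ε * W * B) + t ^ 2 • (C * (W * diagonal ε * W) * B)) := by
  have hlhs : 1 - t • (W * B * C - W) = 1 + t • W - t • W * B * C := by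
    rw [smul_sub, Matrix.smul_mul, Matrix.smul_mul]
    abel
  have hrhs : C * ((1 - t • W) * diagonal ε * (t • W) * B)
      = t • (C * diagonal ε * W * B) - t ^ 2 • (C * (W * diagonal ε * W) * B) := by
    simp only [Matrix.sub_mul, Matrix.mul_sub, Matrix.one_mul, Matrix.smul_mul, Matrix.mul_smul,
      Matrix.mul_assoc, smul_sub, smul_smul, pow_two]
  rw [hlhs, det_sub_mul_mul_of_mul_eq_one (one_add_smul_mul_one_sub_smul_mul_diagonal t hW hε),
    hrhs, sub_sub_eq_add_sub, add_sub_right_comm]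

end Matrix

namespace SimpleGraph

variable {V : Type*} (G : SimpleGraph V)

def arcRev : Equiv.Perm (Arc G) :=
  Function.Involutive.toPerm (fun a => ⟨(a.1.2, a.1.1), a.2.symm⟩) fun _ => rfl

@[simp] lemma arcRev_coe (a : Arc G) : (G.arcRev a).1 = (a.1.2, a.1.1) := rfl

@[simp] lemma arcRev_arcRev (a : Arc G) : G.arcRev (G.arcRev a) = a := rfl

@[simp] lemma arcRev_symm : G.arcRev.symm = G.arcRev := rfl

lemma sum_arc_eq_sum_sum {M : Type*} [AddCommMonoid M] [Fintype V] [DecidableRel G.Adj]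
    (F : Arc G → M) :
    ∑ a, F a = ∑ v, ∑ w : {w // G.Adj v w}, F ⟨(v, w), w.2⟩ :=
  (Fintype.sum_equiv (Equiv.subtypeProdEquivSigmaSubtype G.Adj) F
    (fun x => F ⟨(x.1, x.2), x.2.2⟩) fun _ => rfl).trans (Fintype.sum_sigma _)

section Incidence

variable [DecidableEq V] {R : Type*} [Semiring R]

def tailMat (β : Arc G → R) : Matrix (Arc G) V R :=
  of fun a v => if a.1.1 = v then β a else 0

lemma tailMat_mul_transpose_tailMat_apply [Fintype V] (β γ : Arc G → R) (a b : Arc G) :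
    (G.tailMat β * (G.tailMat γ)ᵀ) a b = if a.1.1 = b.1.1 then β a * γ b else 0 := by
  simp [tailMat, mul_apply]

lemma ffShift_eq_submatrix_one [DecidableRel G.Adj] :
    ffShift G = (1 : Matrix (Arc G) (Arc G) ℂ).submatrix id G.arcRev := by
  ext a b
  simp only [ffShift, shiftOp, ffFam, Equiv.refl_apply, submatrix_apply, id, one_apply,
    Subtype.ext_iff, Prod.ext_iff, arcRev_coe]
  congr

variable [Fintype V] [DecidableRel G.Adj]

lemma ffShift_mul {n : Type*} (M : Matrix (Arc G) n ℂ) :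
    ffShift G * M = M.submatrix G.arcRev id := by
  rw [ffShift_eq_submatrix_one, one_submatrix_mul, arcRev_symm]
  rfl

lemma ffShift_mul_diagonal_mul_ffShift_mul_diagonal (f g : Arc G → ℂ) :
    ffShift G * diagonal f * (ffShift G * diagonal g) =
      diagonal fun a => f (G.arcRev a) * g a := by
  ext a b
  rw [Matrix.mul_assoc, ffShift_mul, submatrix_apply, diagonal_mul, ffShift_mul]
  simp [diagonal_apply]

lemma diagonal_mul_tailMat (f β : Arc G → R) :
    diagonal f * G.tailMat β = G.tailMat (f * β) := by
  ext a v
  simp [tailMat, diagonal_mul]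

lemma transpose_tailMat_mul_diagonal (γ f : Arc G → R) :
    (G.tailMat γ)ᵀ * diagonal f = (G.tailMat (γ * f))ᵀ := by
  ext v a
  simp [tailMat, mul_diagonal]

lemma transpose_tailMat_mul_tailMat (γ β : Arc G → R) :
    (G.tailMat γ)ᵀ * G.tailMat β =
      diagonal fun v => ∑ w : {w // G.Adj v w}, γ ⟨(v, w), w.2⟩ * β ⟨(v, w), w.2⟩ := by
  ext i j
  rw [mul_apply, sum_arc_eq_sum_sum, diagonal_apply]
  simp only [transpose_apply, tailMat, of_apply, ite_mul, zero_mul, mul_ite, mul_zero]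
  rcases eq_or_ne i j with rfl | hij
  · simp
  · simp [hij, hij.symm]

lemma transpose_tailMat_mul_ffShift_mul_tailMat (γ β : Arc G → ℂ) :
    (G.tailMat γ)ᵀ * ffShift G * G.tailMat β =
      of fun i j => if h : G.Adj i j then γ ⟨(i, j), h⟩ * β ⟨(j, i), h.symm⟩ else 0 := by
  ext i j
  rw [Matrix.mul_assoc, ffShift_mul, mul_apply, of_apply]
  simp only [transpose_apply, submatrix_apply, id, tailMat, of_apply]
  split_ifs with h
  · refine (Finset.sum_eq_single ⟨(i, j), h⟩ ?_ (by simp)).trans ?_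
    · rintro ⟨⟨x, y⟩, hxy⟩ - hne
      split_ifs with hx hy
      · simp only [arcRev_coe] at hy
        subst hx hy
        exact absurd rfl hne
      all_goals simp only [zero_mul, mul_zero]
    · rw [if_pos rfl]
      exact congrArg _ (if_pos rfl)
  · refine Finset.sum_eq_zero ?_
    rintro ⟨⟨x, y⟩, hxy⟩ -
    split_ifs with hx hy
    · simp only [arcRev_coe] at hy
      subst hx hy
      exact absurd hxy h
    all_goals simp only [zero_mul, mul_zero]

end Incidence

section Orientation

variable [LinearOrder V]

/-- `(false, (i, j))` is the arc `(i, j)` and `(true, (i, j))` is `(j, i)`. -/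
def boolProdEquivArc : Bool × {p : V × V // G.Adj p.1 p.2 ∧ p.1 < p.2} ≃ Arc G where
  toFun x := cond x.1 (G.arcRev ⟨x.2.1, x.2.2.1⟩) ⟨x.2.1, x.2.2.1⟩
  invFun a :=
    if h : a.1.1 < a.1.2 then (false, ⟨a.1, a.2, h⟩)
    else (true, ⟨(a.1.2, a.1.1), a.2.symm, a.2.ne.lt_or_gt.resolve_left h⟩)
  left_inv := by
    rintro ⟨_ | _, e⟩
    · simp [e.2.2]
    · simp [not_lt.mpr e.2.2.le]
  right_inv a := by
    by_cases h : a.1.1 < a.1.2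
    · simp [h]
    · simp only [h, ↓reduceDIte, cond_true]
      rfl

lemma arcRev_boolProdEquivArc (b : Bool) (e : {p : V × V // G.Adj p.1 p.2 ∧ p.1 < p.2}) :
    G.arcRev (G.boolProdEquivArc (b, e)) = G.boolProdEquivArc (!b, e) := by
  cases b <;> rfl

lemma det_one_add_smul_ffShift_mul_diagonal [Fintype V] [DecidableRel G.Adj] (t : ℂ)
    (f : Arc G → ℂ) :
    det (1 + t • (ffShift G * diagonal f)) =
      ∏ e : {p : V × V // G.Adj p.1 p.2 ∧ p.1 < p.2},
        (1 - t ^ 2 * (f ⟨e.1, e.2.1⟩ * f (G.arcRev ⟨e.1, e.2.1⟩))) := by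
  rw [← det_submatrix_equiv_self G.boolProdEquivArc]
  have hblock : (1 + t • (ffShift G * diagonal f)).submatrix G.boolProdEquivArc
      G.boolProdEquivArc = blockDiagonal fun e =>
        of fun b b' => if b = b' then 1 else t * f (G.boolProdEquivArc (b', e)) := by
    ext ⟨b, e⟩ ⟨b', e'⟩
    rw [ffShift_mul]
    simp only [submatrix_apply, Matrix.add_apply, one_apply, EmbeddingLike.apply_eq_iff_eq,
      Prod.mk.injEq, Matrix.smul_apply, arcRev_boolProdEquivArc, id_eq, diagonal_apply,
      Bool.not_eq_eq_eq_not, smul_eq_mul, mul_ite, mul_zero, blockDiagonal_apply, of_apply]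
    by_cases he : e = e'
    · subst he
      cases b <;> cases b' <;> simp
    · simp [he]
  rw [hblock, det_blockDiagonal]
  refine Finset.prod_congr rfl fun e _ => ?_
  rw [← det_submatrix_equiv_self finTwoEquiv, det_fin_two]
  simp only [submatrix_apply, of_apply, ↓reduceIte, mul_one, EmbeddingLike.apply_eq_iff_eq,
    zero_ne_one, one_ne_zero, sub_right_inj]
  change t * f (G.arcRev ⟨e.1, e.2.1⟩) * (t * f ⟨e.1, e.2.1⟩) = _
  ring

end Orientation

end SimpleGraph

section QuantumGraphWalk

variable {V : Type*} [LinearOrder V]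

lemma arcPot_swap {Ae : V → V → ℝ} (hAs : ∀ i j, Ae i j = Ae j i) {i j : V} (hij : i ≠ j) :
    arcPot Ae j i = -arcPot Ae i j := by
  rcases hij.lt_or_gt with h | h <;> simp [arcPot, h, h.not_gt, hAs j i]

variable (G : SimpleGraph V) (L : V → V → ℝ) (Ae : V → V → ℝ) (k : ℝ)

/-- The entries of `D_j(k)`, indexed by the arc `(j, m)`. -/
noncomputable def arcPhase (a : Arc G) : ℂ :=
  exp (I * L a.1.1 a.1.2 * (k - arcPot Ae a.1.1 a.1.2))

noncomputable def phaseShift [Fintype V] [DecidableRel G.Adj] : Matrix (Arc G) (Arc G) ℂ :=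
  ffShift G * diagonal (arcPhase G L Ae k)

variable {G L Ae k}

lemma arcPhase_swap (hLs : ∀ i j, L i j = L j i) (hAs : ∀ i j, Ae i j = Ae j i) {i j : V}
    (h : G.Adj i j) :
    arcPhase G L Ae k ⟨(j, i), h.symm⟩ = exp (I * L i j * (k + arcPot Ae i j)) := by
  rw [arcPhase, hLs j i, arcPot_swap hAs h.ne]
  push_cast
  ring_nf

lemma arcPhase_mul_arcPhase_arcRev (hLs : ∀ i j, L i j = L j i)
    (hAs : ∀ i j, Ae i j = Ae j i) (a : Arc G) :
    arcPhase G L Ae k a * arcPhase G L Ae k (G.arcRev a) = exp (2 * I * k * L a.1.1 a.1.2) := by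
  rw [show G.arcRev a = ⟨(a.1.2, a.1.1), a.2.symm⟩ from rfl, arcPhase_swap hLs hAs a.2, arcPhase,
    ← exp_add]
  ring_nf

variable (G L Ae k) [Fintype V] [DecidableRel G.Adj] (lam : V → ℝ)
  (α : ∀ j : V, {w : V // G.Adj j w} → ℂ)

/-- `⊕_j (1 + e^{-iρ_j(k)}) |α_j⟩` -/
noncomputable def coinKet : Matrix (Arc G) V ℂ :=
  G.tailMat fun a => (1 + expNegRho G lam k a.1.1) * α a.1.1 ⟨a.1.2, a.2⟩

/-- `⊕_j ⟨α_j|` -/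
noncomputable def coinBra : Matrix V (Arc G) ℂ :=
  (G.tailMat fun a => starRingEnd ℂ (α a.1.1 ⟨a.1.2, a.2⟩))ᵀ

/-- `T(t)` -/
noncomputable def genQgT (t : ℂ) : Matrix V V ℂ :=
  Matrix.of fun i j : V =>
    if h : G.Adj i j then
      Complex.exp (Complex.I * (L i j : ℂ) * ((k : ℂ) + (arcPot Ae i j : ℂ))) *
          (1 + expNegRho G lam k j) * α j ⟨i, h.symm⟩ *
          (starRingEnd ℂ) (α i ⟨j, h⟩) /
        (1 - t ^ 2 * Complex.exp (2 * Complex.I * (k : ℂ) * (L i j : ℂ)))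
    else 0

/-- `𝒟(t)` -/
noncomputable def genQgD (t : ℂ) : Matrix V V ℂ :=
  Matrix.of fun i j : V =>
    if i = j then
      (1 + expNegRho G lam k j) *
        ∑ l : {w : V // G.Adj j w},
          (Complex.normSq (α j l) : ℂ) *
            Complex.exp (2 * Complex.I * (k : ℂ) * (L j l.1 : ℂ)) /
            (1 - t ^ 2 * Complex.exp (2 * Complex.I * (k : ℂ) * (L j l.1 : ℂ)))
    else 0

variable {G L Ae k lam α}

lemma coinOp_genQgCoin :
    coinOp G (genQgCoin G L lam Ae k α) =
      diagonal (arcPhase G L Ae k) * (coinKet G k lam α * coinBra G α - 1) := by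
  ext ⟨⟨a₁, a₂⟩, ha⟩ ⟨⟨b₁, b₂⟩, hb⟩
  rw [diagonal_mul, Matrix.sub_apply, coinKet, coinBra,
    SimpleGraph.tailMat_mul_transpose_tailMat_apply, one_apply]
  by_cases h : a₁ = b₁
  · subst h
    simp [coinOp, genQgCoin, arcPhase]
  · simp [coinOp, h]

lemma ffShift_mul_coinOp_genQgCoin :
    ffShift G * coinOp G (genQgCoin G L lam Ae k α) =
      phaseShift G L Ae k * coinKet G k lam α * coinBra G α - phaseShift G L Ae k := by
  rw [coinOp_genQgCoin, phaseShift]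
  simp only [Matrix.mul_sub, Matrix.mul_one, Matrix.mul_assoc]

lemma phaseShift_mul_phaseShift (hLs : ∀ i j, L i j = L j i) (hAs : ∀ i j, Ae i j = Ae j i) :
    phaseShift G L Ae k * phaseShift G L Ae k =
      diagonal fun a => exp (2 * I * k * L a.1.1 a.1.2) := by
  rw [phaseShift, G.ffShift_mul_diagonal_mul_ffShift_mul_diagonal]
  exact congrArg diagonal (funext fun a => (mul_comm _ _).trans
    (arcPhase_mul_arcPhase_arcRev hLs hAs a))

lemma det_one_add_smul_phaseShift (hLs : ∀ i j, L i j = L j i) (hAs : ∀ i j, Ae i j = Ae j i)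
    (t : ℂ) :
    det (1 + t • phaseShift G L Ae k) =
      ∏ e ∈ Finset.univ.filter (fun e : V × V => G.Adj e.1 e.2 ∧ e.1 < e.2),
        (1 - t ^ 2 * exp (2 * I * k * L e.1 e.2)) := by
  rw [phaseShift, G.det_one_add_smul_ffShift_mul_diagonal,
    Finset.prod_subtype _ fun _ => Finset.mem_filter.trans (and_iff_right (Finset.mem_univ _))]
  exact Finset.prod_congr rfl fun e _ => by rw [arcPhase_mul_arcPhase_arcRev hLs hAs]

lemma coinBra_mul_diagonal_mul_phaseShift_mul_coinKet (hLs : ∀ i j, L i j = L j i)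
    (hAs : ∀ i j, Ae i j = Ae j i) (t : ℂ) :
    coinBra G α * diagonal (fun a : Arc G => (1 - t ^ 2 * exp (2 * I * k * L a.1.1 a.1.2))⁻¹) *
        phaseShift G L Ae k * coinKet G k lam α =
      genQgT G L Ae k lam α t := by
  rw [coinBra, coinKet, phaseShift, G.transpose_tailMat_mul_diagonal, ← Matrix.mul_assoc,
    Matrix.mul_assoc _ (diagonal _), G.diagonal_mul_tailMat,
    G.transpose_tailMat_mul_ffShift_mul_tailMat]
  ext i j
  simp only [genQgT, of_apply]
  split_ifs with h
  · simp only [Pi.mul_apply, arcPhase_swap hLs hAs h]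
    rw [div_eq_mul_inv]
    ring
  · rfl

lemma coinBra_mul_phaseShift_mul_diagonal_mul_phaseShift_mul_coinKet
    (hLs : ∀ i j, L i j = L j i) (hAs : ∀ i j, Ae i j = Ae j i) (t : ℂ) :
    coinBra G α * (phaseShift G L Ae k *
        diagonal (fun a : Arc G => (1 - t ^ 2 * exp (2 * I * k * L a.1.1 a.1.2))⁻¹) *
        phaseShift G L Ae k) * coinKet G k lam α =
      genQgD G L k lam α t := by
  have hsym : ∀ a : Arc G,
      arcPhase G L Ae k (G.arcRev a) * (1 - t ^ 2 * exp (2 * I * k * L a.1.2 a.1.1))⁻¹ *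
          arcPhase G L Ae k a =
        (1 - t ^ 2 * exp (2 * I * k * L a.1.1 a.1.2))⁻¹ * exp (2 * I * k * L a.1.1 a.1.2) := by
    intro a
    rw [hLs a.1.2, ← arcPhase_mul_arcPhase_arcRev hLs hAs a]
    ring
  rw [coinBra, coinKet, phaseShift, Matrix.mul_assoc (ffShift G) (diagonal _),
    diagonal_mul_diagonal, G.ffShift_mul_diagonal_mul_ffShift_mul_diagonal,
    G.transpose_tailMat_mul_diagonal, G.transpose_tailMat_mul_tailMat]
  ext i j
  rw [diagonal_apply, genQgD, of_apply]
  split_ifs with hij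
  · subst hij
    rw [Finset.mul_sum]
    refine Finset.sum_congr rfl fun l _ => ?_
    simp only [Pi.mul_apply, G.arcRev_coe]
    rw [hsym, ← Complex.mul_conj, div_eq_mul_inv]
    ring
  · rfl

end QuantumGraphWalk

theorem genQgWalk_det_identity_general {V : Type*} [Fintype V] [LinearOrder V]
    (G : SimpleGraph V) [DecidableRel G.Adj]
    (L : V → V → ℝ) (hLs : ∀ i j, L i j = L j i)
    (lam : V → ℝ)
    (Ae : V → V → ℝ) (hAs : ∀ i j, Ae i j = Ae j i)
    (k : ℝ)
    (α : ∀ j : V, {w : V // G.Adj j w} → ℂ)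
    (t : ℂ)
    (ht : ∀ i j : V, G.Adj i j →
      t ^ 2 * Complex.exp (2 * Complex.I * (k : ℂ) * (L i j : ℂ)) ≠ 1) :
    Matrix.det (1 - t • (ffShift G * coinOp G (genQgCoin G L lam Ae k α))) =
      Matrix.det
        ((1 : Matrix V V ℂ) -
          t • Matrix.of (fun i j : V =>
            if h : G.Adj i j then
              Complex.exp (Complex.I * (L i j : ℂ) * ((k : ℂ) + (arcPot Ae i j : ℂ))) *
                  (1 + expNegRho G lam k j) * α j ⟨i, h.symm⟩ *
                  (starRingEnd ℂ) (α i ⟨j, h⟩) /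
                (1 - t ^ 2 * Complex.exp (2 * Complex.I * (k : ℂ) * (L i j : ℂ)))
            else 0) +
          t ^ 2 • Matrix.of (fun i j : V =>
            if i = j then
              (1 + expNegRho G lam k j) *
                ∑ l : {w : V // G.Adj j w},
                  (Complex.normSq (α j l) : ℂ) *
                    Complex.exp (2 * Complex.I * (k : ℂ) * (L j l.1 : ℂ)) /
                    (1 - t ^ 2 * Complex.exp (2 * Complex.I * (k : ℂ) * (L j l.1 : ℂ)))
            else 0)) *
        ∏ e ∈ Finset.univ.filter (fun e : V × V => G.Adj e.1 e.2 ∧ e.1 < e.2),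
          (1 - t ^ 2 * Complex.exp (2 * Complex.I * (k : ℂ) * (L e.1 e.2 : ℂ))) := by
  have hε : ∀ a : Arc G, (1 - t ^ 2 * exp (2 * I * k * L a.1.1 a.1.2)) *
      (1 - t ^ 2 * exp (2 * I * k * L a.1.1 a.1.2))⁻¹ = 1 := fun a =>
    mul_inv_cancel₀ (sub_ne_zero.mpr (ht a.1.1 a.1.2 a.2).symm)
  rw [ffShift_mul_coinOp_genQgCoin,
    det_one_sub_smul_mul_mul_sub t (phaseShift_mul_phaseShift hLs hAs) hε,
    det_one_add_smul_phaseShift hLs hAs, coinBra_mul_diagonal_mul_phaseShift_mul_coinKet hLs hAs,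
    coinBra_mul_phaseShift_mul_diagonal_mul_phaseShift_mul_coinKet hLs hAs, mul_comm]
  rfl

/-- determinant identity for generalized quantum graph walks:
`det(I_{2|E|} − t·Ũ(k)) = det(I_{|V|} − t·T(t) + t²·𝒟(t)) · ∏_{e∈E}(1 − t²·e^{2ikL_e})`. -/
theorem genQgWalk_det_identity {V : Type*} [Fintype V] [LinearOrder V]
    (G : SimpleGraph V) [DecidableRel G.Adj] (hG : G.Connected)
    (L : V → V → ℝ) (hLs : ∀ i j, L i j = L j i) (hLpos : ∀ i j, G.Adj i j → 0 < L i j)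
    (lam : V → ℝ) (hlam : ∀ i, 0 ≤ lam i)
    (Ae : V → V → ℝ) (hAs : ∀ i j, Ae i j = Ae j i)
    (k : ℝ) (hk : k ≠ 0)
    (α : ∀ j : V, {w : V // G.Adj j w} → ℂ)
    (hα : ∀ j : V, ∑ l : {w : V // G.Adj j w}, Complex.normSq (α j l) = 1)
    (t : ℂ)
    (ht : ∀ i j : V, G.Adj i j →
      t ^ 2 * Complex.exp (2 * Complex.I * (k : ℂ) * (L i j : ℂ)) ≠ 1) :
    Matrix.det (1 - t • (ffShift G * coinOp G (genQgCoin G L lam Ae k α))) =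
      Matrix.det
        ((1 : Matrix V V ℂ) -
          t • Matrix.of (fun i j : V =>
            if h : G.Adj i j then
              Complex.exp (Complex.I * (L i j : ℂ) * ((k : ℂ) + (arcPot Ae i j : ℂ))) *
                  (1 + expNegRho G lam k j) * α j ⟨i, h.symm⟩ *
                  (starRingEnd ℂ) (α i ⟨j, h⟩) /
                (1 - t ^ 2 * Complex.exp (2 * Complex.I * (k : ℂ) * (L i j : ℂ)))
            else 0) +
          t ^ 2 • Matrix.of (fun i j : V =>
            if i = j then
              (1 + expNegRho G lam k j) *
                ∑ l : {w : V // G.Adj j w},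
                  (Complex.normSq (α j l) : ℂ) *
                    Complex.exp (2 * Complex.I * (k : ℂ) * (L j l.1 : ℂ)) /
                    (1 - t ^ 2 * Complex.exp (2 * Complex.I * (k : ℂ) * (L j l.1 : ℂ)))
            else 0)) *
        ∏ e ∈ Finset.univ.filter (fun e : V × V => G.Adj e.1 e.2 ∧ e.1 < e.2),
          (1 - t ^ 2 * Complex.exp (2 * Complex.I * (k : ℂ) * (L e.1 e.2 : ℂ))) :=
  genQgWalk_det_identity_general G L hLs lam Ae hAs k α t ht
end
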